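/- arXiv:1604.02308 — 3 statements merged into one kernel-verified Lean document; each statement's English description precedes it below -/
import Mathlib

section
/- Let c, K > 0 and let f, g, h : ℝ → ℝ be continuous. Suppose 0 < u̲ ≤ ū and 0 < v̲ ≤ v̄ satisfy the coupled upper–lower solution inequalities f(ū) − v̲ ≤ 0, h(v̄) + c·g(ū) ≤ 0, f(u̲) − v̄ ≥ 0, h(v̲) + c·g(u̲) ≥ 0. Suppose g(u) > 0 for all u ∈ [u̲, ū], g is nondecreasing on [u̲, ū], and for all u₁, u₂ ∈ [u̲, ū] and v₁, v₂ ∈ [v̲, v̄] one has |g(u₁)(f(u₁) − v₁) − g(u₂)(f(u₂) − v₂)| ≤ K(|u₁ − u₂| + |v₁ − v₂|) and |v₁h(v₁) + c·g(u₁)v₁ − v₂h(v₂) − c·g(u₂)v₂| ≤ K(|u₁ − u₂| + |v₁ − v₂|). Define sequences by ū⁽⁰⁾ = ū, u̲⁽⁰⁾ = u̲, v̄⁽⁰⁾ = v̄, v̲⁽⁰⁾ = v̲ and ū⁽ᵐ⁺¹⁾ = ū⁽ᵐ⁾ + g(ū⁽ᵐ⁾)[f(ū⁽ᵐ⁾)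 − v̲⁽ᵐ⁾]/K, u̲⁽ᵐ⁺¹⁾ = u̲⁽ᵐ⁾ + g(u̲⁽ᵐ⁾)[f(u̲⁽ᵐ⁾) − v̄⁽ᵐ⁾]/K, v̄⁽ᵐ⁺¹⁾ = v̄⁽ᵐ⁾ + v̄⁽ᵐ⁾[h(v̄⁽ᵐ⁾) + c·g(ū⁽ᵐ⁾)]/K, v̲⁽ᵐ⁺¹⁾ = v̲⁽ᵐ⁾ + v̲⁽ᵐ⁾[h(v̲⁽ᵐ⁾) + c·g(u̲⁽ᵐ⁾)]/K. Then for all m: (ū⁽ᵐ⁾) and (v̄⁽ᵐ⁾) are nonincreasing, (u̲⁽ᵐ⁾) and (v̲⁽ᵐ⁾) are nondecreasing, and u̲ ≤ u̲⁽ᵐ⁾ ≤ ū⁽ᵐ⁾ ≤ ū, v̲ ≤ v̲⁽ᵐ⁾ ≤ v̄⁽ᵐ⁾ ≤ v̄; moreover the limits ũ = lim ū⁽ᵐ⁾, ǔ = lim u̲⁽ᵐ⁾, ṽ = lim v̄⁽ᵐ⁾, v̌ = lim v̲⁽ᵐ⁾ exist, satisfy u̲ ≤ ǔ ≤ ũ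 ≤ ū and v̲ ≤ v̌ ≤ ṽ ≤ v̄, and satisfy the limit equations f(ũ) = v̌, h(ṽ) + c·g(ũ) = 0, f(ǔ) = ṽ, h(v̌) + c·g(ǔ) = 0. -/
/-!
The prey and predator equations are rewritten as fixed-point problems `u = F(u, v)`,
`v = G(u, v)` with `F(u, v) = u + g(u)(f(u) - v)/K` and `G(u, v) = v + v(h(v) + c g(u))/K`.
Adding `K` times the identity to a `K`-Lipschitz reaction term makes it nondecreasing, so on the
rectangle `F` is nondecreasing in `u` and nonincreasing in `v` (as `g > 0`), while `G` is
nondecreasing in both variables (as `g` is nondecreasing). The coupled iteration therefore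
preserves the order of the upper and lower solutions, which makes all four sequences monotone and
trapped in the rectangle; their limits are fixed points of `F` and `G` by continuity.
-/

open Filter Topology Set Function

structure IsMixedMonotoneOn {α β : Type*} [Preorder α] [Preorder β]
    (F : α → β → α) (G : α → β → β) (s : Set α) (t : Set β) : Prop where
  F_monotoneOn_left : ∀ v ∈ t, MonotoneOn (F · v) s
  F_antitoneOn_right : ∀ u ∈ s, AntitoneOn (F u) t
  G_monotoneOn_left : ∀ v ∈ t, MonotoneOn (G · v) s
  G_monotoneOn_right : ∀ u ∈ s, MonotoneOn (G u) t

namespace IsMixedMonotoneOn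

variable {α β : Type*} [Preorder α] [Preorder β] {F : α → β → α} {G : α → β → β}
  {s : Set α} {t : Set β} {u u' : α} {v v' : β}

theorem F_le_F (hFG : IsMixedMonotoneOn F G s t) (hu : u ∈ s) (hu' : u' ∈ s) (hv : v ∈ t)
    (hv' : v' ∈ t) (hle : u ≤ u') (hle' : v' ≤ v) : F u v ≤ F u' v' :=
  (hFG.F_antitoneOn_right u hu hv' hv hle').trans (hFG.F_monotoneOn_left v' hv' hu hu' hle)

theorem G_le_G (hFG : IsMixedMonotoneOn F G s t) (hu : u ∈ s) (hu' : u' ∈ s) (hv : v ∈ t)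
    (hv' : v' ∈ t) (hle : u ≤ u') (hle' : v ≤ v') : G u v ≤ G u' v' :=
  (hFG.G_monotoneOn_right u hu hv hv' hle').trans (hFG.G_monotoneOn_left v' hv' hu hu' hle)

variable {ul uu : α} {vl vu : β} {U L : ℕ → α} {V W : ℕ → β}

theorem iterate_mem_Icc (hFG : IsMixedMonotoneOn F G (Icc ul uu) (Icc vl vu))
    (hu : ul ≤ uu) (hv : vl ≤ vu)
    (hFu : F uu vl ≤ uu) (hFl : ul ≤ F ul vu) (hGu : G uu vu ≤ vu)
    (hGl : vl ≤ G ul vl) (hU0 : U 0 = uu) (hL0 : L 0 = ul) (hV0 : V 0 = vu) (hW0 : W 0 = vl)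
    (hUrec : ∀ m, U (m + 1) = F (U m) (W m)) (hLrec : ∀ m, L (m + 1) = F (L m) (V m))
    (hVrec : ∀ m, V (m + 1) = G (U m) (V m)) (hWrec : ∀ m, W (m + 1) = G (L m) (W m)) :
    ∀ m, (ul ≤ L m ∧ L m ≤ U m ∧ U m ≤ uu) ∧ (vl ≤ W m ∧ W m ≤ V m ∧ V m ≤ vu) := by
  intro m
  induction m with
  | zero => simp [hU0, hL0, hV0, hW0, hu, hv]
  | succ m ih =>
    obtain ⟨⟨hLl, hLU, hUu⟩, ⟨hWl, hWV, hVu⟩⟩ := ih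
    have hul : ul ∈ Icc ul uu := ⟨le_rfl, hu⟩
    have huu : uu ∈ Icc ul uu := ⟨hu, le_rfl⟩
    have hvl : vl ∈ Icc vl vu := ⟨le_rfl, hv⟩
    have hvu : vu ∈ Icc vl vu := ⟨hv, le_rfl⟩
    have hL : L m ∈ Icc ul uu := ⟨hLl, hLU.trans hUu⟩
    have hU : U m ∈ Icc ul uu := ⟨hLl.trans hLU, hUu⟩
    have hW : W m ∈ Icc vl vu := ⟨hWl, hWV.trans hVu⟩
    have hV : V m ∈ Icc vl vu := ⟨hWl.trans hWV, hVu⟩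
    rw [hUrec, hLrec, hVrec, hWrec]
    exact ⟨⟨hFl.trans (hFG.F_le_F hul hL hvu hV hLl hVu), hFG.F_le_F hL hU hV hW hLU hWV,
        (hFG.F_le_F hU huu hW hvl hUu hWl).trans hFu⟩,
      ⟨hGl.trans (hFG.G_le_G hul hL hvl hW hLl hWl), hFG.G_le_G hL hU hW hV hLU hWV,
        (hFG.G_le_G hU huu hV hvu hUu hVu).trans hGu⟩⟩

theorem iterate_monotone (hFG : IsMixedMonotoneOn F G (Icc ul uu) (Icc vl vu))
    (hFu : F uu vl ≤ uu) (hFl : ul ≤ F ul vu) (hGu : G uu vu ≤ vu)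
    (hGl : vl ≤ G ul vl) (hU0 : U 0 = uu) (hL0 : L 0 = ul) (hV0 : V 0 = vu) (hW0 : W 0 = vl)
    (hUrec : ∀ m, U (m + 1) = F (U m) (W m)) (hLrec : ∀ m, L (m + 1) = F (L m) (V m))
    (hVrec : ∀ m, V (m + 1) = G (U m) (V m)) (hWrec : ∀ m, W (m + 1) = G (L m) (W m))
    (hbox : ∀ m, (ul ≤ L m ∧ L m ≤ U m ∧ U m ≤ uu) ∧ (vl ≤ W m ∧ W m ≤ V m ∧ V m ≤ vu)) :
    Antitone U ∧ Monotone L ∧ Antitone V ∧ Monotone W := by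
  have memU k : U k ∈ Icc ul uu := ⟨(hbox k).1.1.trans (hbox k).1.2.1, (hbox k).1.2.2⟩
  have memL k : L k ∈ Icc ul uu := ⟨(hbox k).1.1, (hbox k).1.2.1.trans (hbox k).1.2.2⟩
  have memV k : V k ∈ Icc vl vu := ⟨(hbox k).2.1.trans (hbox k).2.2.1, (hbox k).2.2.2⟩
  have memW k : W k ∈ Icc vl vu := ⟨(hbox k).2.1, (hbox k).2.2.1.trans (hbox k).2.2.2⟩
  have key : ∀ m, (U (m + 1) ≤ U m ∧ L m ≤ L (m + 1)) ∧ (V (m + 1) ≤ V m ∧ W m ≤ W (m + 1)) := by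
    intro m
    induction m with
    | zero => rw [hUrec, hLrec, hVrec, hWrec, hU0, hL0, hV0, hW0]; exact ⟨⟨hFu, hFl⟩, hGu, hGl⟩
    | succ m ih =>
      obtain ⟨⟨hU, hL⟩, ⟨hV, hW⟩⟩ := ih
      refine ⟨⟨?_, ?_⟩, ?_, ?_⟩
      · exact (hUrec _).trans_le <|
          (hFG.F_le_F (memU _) (memU _) (memW _) (memW _) hU hW).trans_eq (hUrec _).symm
      · exact (hLrec _).trans_le <|
          (hFG.F_le_F (memL _) (memL _) (memV _) (memV _) hL hV).trans_eq (hLrec _).symm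
      · exact (hVrec _).trans_le <|
          (hFG.G_le_G (memU _) (memU _) (memV _) (memV _) hU hV).trans_eq (hVrec _).symm
      · exact (hWrec _).trans_le <|
          (hFG.G_le_G (memL _) (memL _) (memW _) (memW _) hL hW).trans_eq (hWrec _).symm
  exact ⟨antitone_nat_of_succ_le fun m => (key m).1.1, monotone_nat_of_le_succ fun m => (key m).1.2,
    antitone_nat_of_succ_le fun m => (key m).2.1, monotone_nat_of_le_succ fun m => (key m).2.2⟩

end IsMixedMonotoneOn

theorem exists_tendsto_of_monotone_of_antitone {α : Type*} [ConditionallyCompleteLinearOrder α]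
    [TopologicalSpace α] [OrderTopology α] {L U : ℕ → α} (hL : Monotone L) (hU : Antitone U)
    (hLU : ∀ m, L m ≤ U m) :
    ∃ a b, Tendsto L atTop (𝓝 a) ∧ Tendsto U atTop (𝓝 b) ∧ L 0 ≤ a ∧ a ≤ b ∧ b ≤ U 0 := by
  have hLa : Tendsto L atTop (𝓝 (⨆ m, L m)) :=
    tendsto_atTop_ciSup hL ⟨U 0, by rintro _ ⟨m, rfl⟩; exact (hLU m).trans (hU m.zero_le)⟩
  have hUb : Tendsto U atTop (𝓝 (⨅ m, U m)) :=
    tendsto_atTop_ciInf hU ⟨L 0, by rintro _ ⟨m, rfl⟩; exact (hL m.zero_le).trans (hLU m)⟩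
  exact ⟨_, _, hLa, hUb, hL.ge_of_tendsto hLa 0, le_of_tendsto_of_tendsto' hLa hUb hLU,
    hU.le_of_tendsto hUb 0⟩

theorem apply_eq_of_tendsto_of_succ_eq {α β γ : Type*} [TopologicalSpace α] [TopologicalSpace β]
    [TopologicalSpace γ] [T2Space γ] {φ : α → β → γ} (hφ : Continuous (uncurry φ))
    {x : ℕ → α} {y : ℕ → β} {z : ℕ → γ} {a : α} {b : β} {c : γ}
    (hx : Tendsto x atTop (𝓝 a)) (hy : Tendsto y atTop (𝓝 b)) (hz : Tendsto z atTop (𝓝 c))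
    (hrec : ∀ m, z (m + 1) = φ (x m) (y m)) : φ a b = c := by
  refine tendsto_nhds_unique ((hφ.tendsto (a, b)).comp (hx.prodMk_nhds hy)) ?_
  exact (hz.comp (tendsto_add_atTop_nat 1)).congr hrec

theorem monotoneOn_add_div_of_abs_sub_le {φ : ℝ → ℝ} {s : Set ℝ} {K : ℝ} (hK : 0 < K)
    (hφ : ∀ x ∈ s, ∀ y ∈ s, |φ x - φ y| ≤ K * |x - y|) :
    MonotoneOn (fun x => x + φ x / K) s := by
  intro x hx y hy hxy
  have hφxy : φ x - φ y ≤ K * (y - x) := by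
    have := (abs_le.mp (hφ x hx y hy)).2
    rwa [abs_sub_comm, abs_of_nonneg (sub_nonneg.mpr hxy)] at this
  have : φ x / K - φ y / K ≤ y - x := by rw [← sub_div, div_le_iff₀ hK]; linarith
  dsimp only
  linarith

noncomputable def preyStep (f g : ℝ → ℝ) (K u v : ℝ) : ℝ := u + g u * (f u - v) / K

noncomputable def predatorStep (g h : ℝ → ℝ) (c K u v : ℝ) : ℝ := v + v * (h v + c * g u) / K

section PredatorPrey

variable {f g h : ℝ → ℝ} {c K u v : ℝ}

theorem continuous_preyStep (hf : Continuous f) (hg : Continuous g) :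
    Continuous (uncurry (preyStep f g K)) := by
  unfold preyStep; fun_prop

theorem continuous_predatorStep (hg : Continuous g) (hh : Continuous h) :
    Continuous (uncurry (predatorStep g h c K)) := by
  unfold predatorStep; fun_prop

theorem preyStep_le_self (hK : 0 ≤ K) (hg : 0 ≤ g u) (hsol : f u - v ≤ 0) :
    preyStep f g K u v ≤ u :=
  add_le_of_nonpos_right <|
    div_nonpos_of_nonpos_of_nonneg (mul_nonpos_of_nonneg_of_nonpos hg hsol) hK

theorem self_le_preyStep (hK : 0 ≤ K) (hg : 0 ≤ g u) (hsol : 0 ≤ f u - v) :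
    u ≤ preyStep f g K u v :=
  le_add_of_nonneg_right (div_nonneg (mul_nonneg hg hsol) hK)

theorem predatorStep_le_self (hK : 0 ≤ K) (hv : 0 ≤ v) (hsol : h v + c * g u ≤ 0) :
    predatorStep g h c K u v ≤ v :=
  add_le_of_nonpos_right <|
    div_nonpos_of_nonpos_of_nonneg (mul_nonpos_of_nonneg_of_nonpos hv hsol) hK

theorem self_le_predatorStep (hK : 0 ≤ K) (hv : 0 ≤ v) (hsol : 0 ≤ h v + c * g u) :
    v ≤ predatorStep g h c K u v :=
  le_add_of_nonneg_right (div_nonneg (mul_nonneg hv hsol) hK)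

theorem preyStep_eq_self_iff (hK : K ≠ 0) (hg : g u ≠ 0) :
    preyStep f g K u v = u ↔ f u = v := by
  simp [preyStep, hK, hg, sub_eq_zero]

theorem predatorStep_eq_self_iff (hK : K ≠ 0) (hv : v ≠ 0) :
    predatorStep g h c K u v = v ↔ h v + c * g u = 0 := by
  simp [predatorStep, hK, hv]

theorem isMixedMonotoneOn_preyStep_predatorStep {ul uu vl vu : ℝ}
    (hc : 0 ≤ c) (hK : 0 < K) (hvl : 0 ≤ vl)
    (hgpos : ∀ u ∈ Icc ul uu, 0 ≤ g u) (hgmono : MonotoneOn g (Icc ul uu))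
    (hLip1 : ∀ u₁ ∈ Icc ul uu, ∀ u₂ ∈ Icc ul uu, ∀ v₁ ∈ Icc vl vu, ∀ v₂ ∈ Icc vl vu,
      |g u₁ * (f u₁ - v₁) - g u₂ * (f u₂ - v₂)| ≤ K * (|u₁ - u₂| + |v₁ - v₂|))
    (hLip2 : ∀ u₁ ∈ Icc ul uu, ∀ u₂ ∈ Icc ul uu, ∀ v₁ ∈ Icc vl vu, ∀ v₂ ∈ Icc vl vu,
      |v₁ * h v₁ + c * g u₁ * v₁ - v₂ * h v₂ - c * g u₂ * v₂| ≤ K * (|u₁ - u₂| + |v₁ - v₂|)) :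
    IsMixedMonotoneOn (preyStep f g K) (predatorStep g h c K) (Icc ul uu) (Icc vl vu) where
  F_monotoneOn_left v hv := monotoneOn_add_div_of_abs_sub_le (φ := fun u => g u * (f u - v)) hK
    fun u₁ h₁ u₂ h₂ => by simpa using hLip1 u₁ h₁ u₂ h₂ v hv v hv
  F_antitoneOn_right u hu v₁ _ v₂ _ hle := by
    have := hgpos u hu
    dsimp only [preyStep]
    gcongr
  G_monotoneOn_left v hv u₁ h₁ u₂ h₂ hle := by
    have := hgmono h₁ h₂ hle
    have : 0 ≤ v := hvl.trans hv.1
    dsimp only [predatorStep]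
    gcongr
  G_monotoneOn_right u hu := monotoneOn_add_div_of_abs_sub_le
    (φ := fun v => v * (h v + c * g u)) hK fun v₁ h₁ v₂ h₂ => by
      convert hLip2 u hu u hu v₁ h₁ v₂ h₂ using 2
      · ring
      · simp

end PredatorPrey

theorem stmt_1_general (c K : ℝ) (hc : 0 < c) (hK : 0 < K)
    (f g h : ℝ → ℝ) (hf : Continuous f) (hg : Continuous g) (hh : Continuous h)
    (ul uu vl vu : ℝ)
    (huu : ul ≤ uu) (hvl : 0 < vl) (hvu : vl ≤ vu)
    (hineq1 : f uu - vl ≤ 0) (hineq2 : h vu + c * g uu ≤ 0)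
    (hineq3 : 0 ≤ f ul - vu) (hineq4 : 0 ≤ h vl + c * g ul)
    (hgpos : ∀ u ∈ Set.Icc ul uu, 0 < g u)
    (hgmono : MonotoneOn g (Set.Icc ul uu))
    (hLip1 : ∀ u₁ ∈ Set.Icc ul uu, ∀ u₂ ∈ Set.Icc ul uu,
      ∀ v₁ ∈ Set.Icc vl vu, ∀ v₂ ∈ Set.Icc vl vu,
      |g u₁ * (f u₁ - v₁) - g u₂ * (f u₂ - v₂)| ≤ K * (|u₁ - u₂| + |v₁ - v₂|))
    (hLip2 : ∀ u₁ ∈ Set.Icc ul uu, ∀ u₂ ∈ Set.Icc ul uu,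
      ∀ v₁ ∈ Set.Icc vl vu, ∀ v₂ ∈ Set.Icc vl vu,
      |v₁ * h v₁ + c * g u₁ * v₁ - v₂ * h v₂ - c * g u₂ * v₂| ≤ K * (|u₁ - u₂| + |v₁ - v₂|))
    (U L V W : ℕ → ℝ)
    (hU0 : U 0 = uu) (hL0 : L 0 = ul) (hV0 : V 0 = vu) (hW0 : W 0 = vl)
    (hUrec : ∀ m, U (m + 1) = U m + g (U m) * (f (U m) - W m) / K)
    (hLrec : ∀ m, L (m + 1) = L m + g (L m) * (f (L m) - V m) / K)
    (hVrec : ∀ m, V (m + 1) = V m + V m * (h (V m) + c * g (U m)) / K)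
    (hWrec : ∀ m, W (m + 1) = W m + W m * (h (W m) + c * g (L m)) / K) :
    Antitone U ∧ Antitone V ∧ Monotone L ∧ Monotone W ∧
    (∀ m, ul ≤ L m ∧ L m ≤ U m ∧ U m ≤ uu) ∧
    (∀ m, vl ≤ W m ∧ W m ≤ V m ∧ V m ≤ vu) ∧
    ∃ ut uc vt vc : ℝ,
      Tendsto U atTop (𝓝 ut) ∧ Tendsto L atTop (𝓝 uc) ∧
      Tendsto V atTop (𝓝 vt) ∧ Tendsto W atTop (𝓝 vc) ∧
      ul ≤ uc ∧ uc ≤ ut ∧ ut ≤ uu ∧ vl ≤ vc ∧ vc ≤ vt ∧ vt ≤ vu ∧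
      f ut = vc ∧ h vt + c * g ut = 0 ∧ f uc = vt ∧ h vc + c * g uc = 0 := by
  have hFG := isMixedMonotoneOn_preyStep_predatorStep hc.le hK hvl.le
    (fun u hu => (hgpos u hu).le) hgmono hLip1 hLip2
  have hul_mem : ul ∈ Icc ul uu := ⟨le_rfl, huu⟩
  have huu_mem : uu ∈ Icc ul uu := ⟨huu, le_rfl⟩
  have hFu := preyStep_le_self hK.le (hgpos uu huu_mem).le hineq1
  have hFl := self_le_preyStep hK.le (hgpos ul hul_mem).le hineq3
  have hGu := predatorStep_le_self hK.le (hvl.trans_le hvu).le hineq2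
  have hGl := self_le_predatorStep hK.le hvl.le hineq4
  have hbox :=
    hFG.iterate_mem_Icc huu hvu hFu hFl hGu hGl hU0 hL0 hV0 hW0 hUrec hLrec hVrec hWrec
  obtain ⟨hUa, hLm, hVa, hWm⟩ :=
    hFG.iterate_monotone hFu hFl hGu hGl hU0 hL0 hV0 hW0 hUrec hLrec hVrec hWrec hbox
  obtain ⟨uc, ut, hLt, hUt, huc, hucut, hut⟩ :=
    exists_tendsto_of_monotone_of_antitone hLm hUa fun m => (hbox m).1.2.1
  obtain ⟨vc, vt, hWt, hVt, hvc, hvcvt, hvt⟩ :=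
    exists_tendsto_of_monotone_of_antitone hWm hVa fun m => (hbox m).2.2.1
  rw [hL0] at huc; rw [hU0] at hut
  rw [hW0] at hvc; rw [hV0] at hvt
  refine ⟨hUa, hVa, hLm, hWm, fun m => (hbox m).1, fun m => (hbox m).2,
    ut, uc, vt, vc, hUt, hLt, hVt, hWt, huc, hucut, hut, hvc, hvcvt, hvt, ?_, ?_, ?_, ?_⟩
  · refine (preyStep_eq_self_iff hK.ne' (hgpos ut ⟨huc.trans hucut, hut⟩).ne').1 ?_
    exact apply_eq_of_tendsto_of_succ_eq (continuous_preyStep hf hg) hUt hWt hUt hUrec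
  · refine (predatorStep_eq_self_iff hK.ne' (hvl.trans_le (hvc.trans hvcvt)).ne').1 ?_
    exact apply_eq_of_tendsto_of_succ_eq (continuous_predatorStep hg hh) hUt hVt hVt hVrec
  · refine (preyStep_eq_self_iff hK.ne' (hgpos uc ⟨huc, hucut.trans hut⟩).ne').1 ?_
    exact apply_eq_of_tendsto_of_succ_eq (continuous_preyStep hf hg) hLt hVt hLt hLrec
  · refine (predatorStep_eq_self_iff hK.ne' (hvl.trans_le hvc).ne').1 ?_
    exact apply_eq_of_tendsto_of_succ_eq (continuous_predatorStep hg hh) hLt hWt hWt hWrec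

/-- Monotone iteration scheme from the proof of Theorem 2.2: from a pair of coupled constant
upper and lower solutions, the iteration sequences are monotone, stay in the rectangle, converge,
and their limits satisfy the limit equations. -/
theorem stmt_1 (c K : ℝ) (hc : 0 < c) (hK : 0 < K)
    (f g h : ℝ → ℝ) (hf : Continuous f) (hg : Continuous g) (hh : Continuous h)
    (ul uu vl vu : ℝ)
    (hul : 0 < ul) (huu : ul ≤ uu) (hvl : 0 < vl) (hvu : vl ≤ vu)
    (hineq1 : f uu - vl ≤ 0) (hineq2 : h vu + c * g uu ≤ 0)
    (hineq3 : 0 ≤ f ul - vu) (hineq4 : 0 ≤ h vl + c * g ul)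
    (hgpos : ∀ u ∈ Set.Icc ul uu, 0 < g u)
    (hgmono : MonotoneOn g (Set.Icc ul uu))
    (hLip1 : ∀ u₁ ∈ Set.Icc ul uu, ∀ u₂ ∈ Set.Icc ul uu,
      ∀ v₁ ∈ Set.Icc vl vu, ∀ v₂ ∈ Set.Icc vl vu,
      |g u₁ * (f u₁ - v₁) - g u₂ * (f u₂ - v₂)| ≤ K * (|u₁ - u₂| + |v₁ - v₂|))
    (hLip2 : ∀ u₁ ∈ Set.Icc ul uu, ∀ u₂ ∈ Set.Icc ul uu,
      ∀ v₁ ∈ Set.Icc vl vu, ∀ v₂ ∈ Set.Icc vl vu,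
      |v₁ * h v₁ + c * g u₁ * v₁ - v₂ * h v₂ - c * g u₂ * v₂| ≤ K * (|u₁ - u₂| + |v₁ - v₂|))
    (U L V W : ℕ → ℝ)
    (hU0 : U 0 = uu) (hL0 : L 0 = ul) (hV0 : V 0 = vu) (hW0 : W 0 = vl)
    (hUrec : ∀ m, U (m + 1) = U m + g (U m) * (f (U m) - W m) / K)
    (hLrec : ∀ m, L (m + 1) = L m + g (L m) * (f (L m) - V m) / K)
    (hVrec : ∀ m, V (m + 1) = V m + V m * (h (V m) + c * g (U m)) / K)
    (hWrec : ∀ m, W (m + 1) = W m + W m * (h (W m) + c * g (L m)) / K) :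
    Antitone U ∧ Antitone V ∧ Monotone L ∧ Monotone W ∧
    (∀ m, ul ≤ L m ∧ L m ≤ U m ∧ U m ≤ uu) ∧
    (∀ m, vl ≤ W m ∧ W m ≤ V m ∧ V m ≤ vu) ∧
    ∃ ut uc vt vc : ℝ,
      Tendsto U atTop (𝓝 ut) ∧ Tendsto L atTop (𝓝 uc) ∧
      Tendsto V atTop (𝓝 vt) ∧ Tendsto W atTop (𝓝 vc) ∧
      ul ≤ uc ∧ uc ≤ ut ∧ ut ≤ uu ∧ vl ≤ vc ∧ vc ≤ vt ∧ vt ≤ vu ∧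
      f ut = vc ∧ h vt + c * g ut = 0 ∧ f uc = vt ∧ h vc + c * g uc = 0 :=
  stmt_1_general c K hc hK f g h hf hg hh ul uu vl vu huu hvl hvu hineq1 hineq2 hineq3 hineq4 hgpos
    hgmono hLip1 hLip2 U L V W hU0 hL0 hV0 hW0 hUrec hLrec hVrec hWrec
end

section
/- Let β, d, p, r > 0 be real numbers, and define h(v) = β(d − v)(v − p)/(v + r) for v ≥ 0. If w > (dp + dr + pr)/r, then for every v > 0 with v ≠ w one has (h(v) − h(w))·(v − w) < 0. -/
/-!
The difference quotient of `h` is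
`(h v - h w) / (v - w) = -β (v w + r v + r w - (d p + d r + p r)) / ((v + r) (w + r))`,
and the hypothesis on `w` says exactly `r w > d p + d r + p r`, so for `v > 0` the numerator
`v w + r v + r w - (d p + d r + p r)` is positive.
-/

noncomputable def alleeRate (β d p r v : ℝ) : ℝ := β * (d - v) * (v - p) / (v + r)

theorem alleeRate_sub_alleeRate (β d p r : ℝ) {v w : ℝ} (hv : v + r ≠ 0) (hw : w + r ≠ 0) :
    alleeRate β d p r v - alleeRate β d p r w
      = -β * (v - w) * (v * w + r * v + r * w - (d * p + d * r + p * r))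
        / ((v + r) * (w + r)) := by
  unfold alleeRate
  field_simp
  ring

theorem alleeRate_sub_mul_sub_neg {β d p r v w : ℝ} (hβ : 0 < β) (hv : 0 < v + r)
    (hw : 0 < w + r) (hvw : v ≠ w) (hQ : d * p + d * r + p * r < v * w + r * v + r * w) :
    (alleeRate β d p r v - alleeRate β d p r w) * (v - w) < 0 := by
  rw [alleeRate_sub_alleeRate β d p r hv.ne' hw.ne', div_mul_eq_mul_div]
  refine div_neg_of_neg_of_pos ?_ (by positivity)
  have hsq : 0 < (v - w) ^ 2 := sq_pos_of_ne_zero (sub_ne_zero.mpr hvw)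
  have hprod : 0 < β * (v - w) ^ 2 * (v * w + r * v + r * w - (d * p + d * r + p * r)) :=
    mul_pos (mul_pos hβ hsq) (sub_pos.mpr hQ)
  linarith [show -β * (v - w) * (v * w + r * v + r * w - (d * p + d * r + p * r)) * (v - w)
    = -(β * (v - w) ^ 2 * (v * w + r * v + r * w - (d * p + d * r + p * r))) by ring]

/-- Remark 3.3(4): the rational strong Allee effect growth rate
`h(v) = β(d - v)(v - p)/(v + r)` with `β, d, p, r > 0` satisfies assumption (A₄) at any
`w > (dp + dr + pr)/r`. -/
theorem stmt_8 (β d p r : ℝ) (hβ : 0 < β) (hd : 0 < d) (hp : 0 < p) (hr : 0 < r)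
    (h : ℝ → ℝ) (hh : ∀ v : ℝ, 0 ≤ v → h v = β * (d - v) * (v - p) / (v + r))
    (w : ℝ) (hw : (d * p + d * r + p * r) / r < w) :
    ∀ v : ℝ, 0 < v → v ≠ w → (h v - h w) * (v - w) < 0 := by
  intro v hv hvw
  have hrw : d * p + d * r + p * r < r * w := by rwa [div_lt_iff₀' hr] at hw
  have hw0 : 0 < w := lt_trans (by positivity) hw
  have hQ : d * p + d * r + p * r < v * w + r * v + r * w := by nlinarith [mul_pos hv hw0]
  rw [hh v hv.le, hh w hw0.le]
  exact alleeRate_sub_mul_sub_neg hβ (by linarith) (by linarith) hvw hQ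
end

section
/- Let a, b, e, m > 0 be real numbers with m·a > 1. Then for all real numbers u₁, u₂ with (a·m − 1)/m ≤ u₁ ≤ u₂ ≤ a, one has (1 + m·u₁)(a − u₁)/b − (1 + m·u₂)(a − u₂)/b + e·u₁/(1 + m·u₁) − e·u₂/(1 + m·u₂) ≥ ((m·a − 1)/b − e)·(u₂ − u₁). -/
/-! On `[(am - 1)/m, a]` the prey term `(1 + mu)(a - u) = a + (ma - 1)u - mu²` decreases with
slope `m(u₁ + u₂) - (ma - 1) ≥ ma - 1`, since `mu ≥ ma - 1` there, while the Holling term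
`u/(1 + mu)` is `1`-Lipschitz for `u ≥ 0`, its difference quotient being `1/((1 + mu₁)(1 + mu₂))`. -/

theorem mul_sub_le_one_add_mul_mul_sub_sub {a m u₁ u₂ : ℝ} (hm : 0 ≤ m)
    (hu₁ : m * a - 1 ≤ m * u₁) (h₁₂ : u₁ ≤ u₂) :
    (m * a - 1) * (u₂ - u₁) ≤ (1 + m * u₁) * (a - u₁) - (1 + m * u₂) * (a - u₂) := by
  have hu₂ : m * a - 1 ≤ m * u₂ := hu₁.trans (mul_le_mul_of_nonneg_left h₁₂ hm)
  have key : (1 + m * u₁) * (a - u₁) - (1 + m * u₂) * (a - u₂) - (m * a - 1) * (u₂ - u₁)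
      = (u₂ - u₁) * ((m * u₁ - (m * a - 1)) + (m * u₂ - (m * a - 1))) := by ring
  linarith [mul_nonneg (sub_nonneg.2 h₁₂) (add_nonneg (sub_nonneg.2 hu₁) (sub_nonneg.2 hu₂))]

theorem div_one_add_mul_sub_div_one_add_mul_le {m u₁ u₂ : ℝ} (hm : 0 ≤ m) (hu₁ : 0 ≤ u₁)
    (h₁₂ : u₁ ≤ u₂) :
    u₂ / (1 + m * u₂) - u₁ / (1 + m * u₁) ≤ u₂ - u₁ := by
  have hd₁ : 1 ≤ 1 + m * u₁ := le_add_of_nonneg_right (mul_nonneg hm hu₁)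
  have hd₂ : 1 ≤ 1 + m * u₂ := le_add_of_nonneg_right (mul_nonneg hm (hu₁.trans h₁₂))
  calc u₂ / (1 + m * u₂) - u₁ / (1 + m * u₁)
      = (u₂ - u₁) / ((1 + m * u₁) * (1 + m * u₂)) := by
        rw [div_sub_div _ _ (one_pos.trans_le hd₂).ne' (one_pos.trans_le hd₁).ne']
        ring
    _ ≤ u₂ - u₁ := div_le_self (sub_nonneg.2 h₁₂) (one_le_mul_of_one_le_of_one_le hd₁ hd₂)

theorem stmt_10_general (a b e m : ℝ) (hb : 0 < b) (he : 0 < e) (hm : 0 < m)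
    (hma : 1 < m * a) :
    ∀ u₁ u₂ : ℝ, (a * m - 1) / m ≤ u₁ → u₁ ≤ u₂ → u₂ ≤ a →
      ((m * a - 1) / b - e) * (u₂ - u₁) ≤
        (1 + m * u₁) * (a - u₁) / b - (1 + m * u₂) * (a - u₂) / b +
          e * u₁ / (1 + m * u₁) - e * u₂ / (1 + m * u₂) := by
  intro u₁ u₂ h₁ h₁₂ _
  have hu₁ : m * a - 1 ≤ m * u₁ := by rwa [mul_comm a m, div_le_iff₀' hm] at h₁
  have hu₁_nonneg : 0 ≤ u₁ := (div_pos (by linarith) hm).le.trans h₁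
  have hprey := mul_sub_le_one_add_mul_mul_sub_sub hm.le hu₁ h₁₂
  have hholling := div_one_add_mul_sub_div_one_add_mul_le hm.le hu₁_nonneg h₁₂
  calc ((m * a - 1) / b - e) * (u₂ - u₁)
      = (m * a - 1) * (u₂ - u₁) / b - e * (u₂ - u₁) := by ring
    _ ≤ ((1 + m * u₁) * (a - u₁) - (1 + m * u₂) * (a - u₂)) / b
          - e * (u₂ / (1 + m * u₂) - u₁ / (1 + m * u₁)) := by gcongr
    _ = _ := by ring

/-- Key inequality in the proof of Proposition 4.3: on the interval `[(am-1)/m, a]`, the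
difference `h(f(u₁)) - c g(u₁) - h(f(u₂)) + c g(u₂)` for the Holling type-II model is bounded
below by `((ma - 1)/b - e)(u₂ - u₁)`. -/
theorem stmt_10 (a b e m : ℝ) (ha : 0 < a) (hb : 0 < b) (he : 0 < e) (hm : 0 < m)
    (hma : 1 < m * a) :
    ∀ u₁ u₂ : ℝ, (a * m - 1) / m ≤ u₁ → u₁ ≤ u₂ → u₂ ≤ a →
      ((m * a - 1) / b - e) * (u₂ - u₁) ≤
        (1 + m * u₁) * (a - u₁) / b - (1 + m * u₂) * (a - u₂) / b +
          e * u₁ / (1 + m * u₁) - e * u₂ / (1 + m * u₂) :=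
  stmt_10_general a b e m hb he hm hma
end
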